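/- Let 𝒦 be a coherent set of desirable gamble sets. For finitely many A₁,…,Aₙ ∈ 𝒦, let 𝔻_{A₁,…,Aₙ} be the set of coherent D such that there exists (g₁,…,gₙ) ∈ A₁×…×Aₙ with 0 ∉ desext({g₁,…,gₙ}) and D ⊇ desext({g₁,…,gₙ}). Then each 𝔻_{A₁,…,Aₙ} is nonempty, and 𝔻_{A₁,…,A_{n₁}} ∩ 𝔻_{C₁,…,C_{n₂}} ⊇ 𝔻_{A₁,…,A_{n₁},C₁,…,C_{n₂}}. -/

import Mathlib

open scoped BigOperators

universe u v

def GambleSpace (Ω : Type v) : Submodule ℝ (Ω → ℝ) where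
  carrier := {f | ∃ M, ∀ ω, |f ω| ≤ M}
  add_mem' := by
    rintro f g ⟨M, hM⟩ ⟨N, hN⟩
    exact ⟨M + N, fun ω => (abs_add_le _ _).trans (add_le_add (hM ω) (hN ω))⟩
  zero_mem' := ⟨0, fun ω => by simp⟩
  smul_mem' := by
    rintro c f ⟨M, hM⟩
    exact ⟨|c| * M, fun ω => by
      simpa [abs_mul] using mul_le_mul_of_nonneg_left (hM ω) (abs_nonneg c)⟩

/-- The type of gambles: bounded functions `Ω → ℝ`. -/
abbrev Gamble (Ω : Type v) := GambleSpace Ω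

/-- Pointwise order on gambles: `gle f g` means `f ≤ g` pointwise. -/
def gle {Ω : Type v} (f g : Gamble Ω) : Prop := ∀ ω, (f : Ω → ℝ) ω ≤ (g : Ω → ℝ) ω

/-- Gambles weakly dominating `0`. -/
def Gpos (Ω : Type v) : Set (Gamble Ω) := {g | gle 0 g ∧ g ≠ 0}

/-- Positive linear hull: finite positive combinations of members of `B`. -/
def posi {Ω : Type v} (B : Set (Gamble Ω)) : Set (Gamble Ω) :=
  {f | ∃ n : ℕ, 0 < n ∧ ∃ (l : Fin n → ℝ) (g : Fin n → Gamble Ω),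
    (∀ i, 0 < l i) ∧ (∀ i, g i ∈ B) ∧ f = ∑ i, l i • g i}

/-- Natural extension of a set of gambles. -/
def desext {Ω : Type v} (E : Set (Gamble Ω)) : Set (Gamble Ω) := posi (E ∪ Gpos Ω)

/-- Coherence for a set of desirable gambles. -/
def CoherentD {Ω : Type v} (D : Set (Gamble Ω)) : Prop :=
  (0 : Gamble Ω) ∉ D ∧ Gpos Ω ⊆ D ∧
  (∀ g ∈ D, ∀ l : ℝ, 0 < l → l • g ∈ D) ∧
  (∀ f ∈ D, ∀ g ∈ D, f + g ∈ D)

/-- Coherence for a set of desirable gamble sets. -/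
def CoherentK {Ω : Type v} (K : Set (Set (Gamble Ω))) : Prop :=
  (∅ : Set (Gamble Ω)) ∉ K ∧
  (∀ A ∈ K, A \ {0} ∈ K) ∧
  (∀ g ∈ Gpos Ω, ({g} : Set (Gamble Ω)) ∈ K) ∧
  (∀ A ∈ K, ∀ B : Set (Gamble Ω), A ⊆ B → B ∈ K) ∧
  (∀ A ∈ K, ∀ F : Gamble Ω → Gamble Ω, (∀ g ∈ A, gle g (F g)) → F '' A ∈ K) ∧
  (∀ n : ℕ, 0 < n → ∀ A : Fin n → Set (Gamble Ω), (∀ i, A i ∈ K) →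
    ∀ F : (Fin n → Gamble Ω) → Gamble Ω,
    (∀ g : Fin n → Gamble Ω, (∀ i, g i ∈ A i) → F g ∈ posi (Set.range g)) →
    {b | ∃ g : Fin n → Gamble Ω, (∀ i, g i ∈ A i) ∧ b = F g} ∈ K)

/-- The infinite addition axiom. -/
def KAddInf {Ω : Type v} (K : Set (Set (Gamble Ω))) : Prop :=
  ∀ (I : Type v) (A : I → Set (Gamble Ω)), (∀ i, A i ∈ K) →
    ∀ F : (I → Gamble Ω) → Gamble Ω,
    (∀ g : I → Gamble Ω, (∀ i, g i ∈ A i) → F g ∈ posi (Set.range g)) →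
    {b | ∃ g : I → Gamble Ω, (∀ i, g i ∈ A i) ∧ b = F g} ∈ K

/-- Natural extension of a set of gamble sets (nonempty case). -/
def ExtK {Ω : Type v} (𝒜 : Set (Set (Gamble Ω))) : Set (Set (Gamble Ω)) :=
  {B | ∃ n : ℕ, 0 < n ∧ ∃ A : Fin n → Set (Gamble Ω), (∀ i, A i ∈ 𝒜) ∧
    ∀ g : Fin n → Gamble Ω, (∀ i, g i ∈ A i) →
      (0 : Gamble Ω) ∉ desext (Set.range g) → ∃ f ∈ B, f ∈ desext (Set.range g)}

/-- The set `𝔻_{A₁,…,Aₙ}` of coherent `D` extending `desext {g₁,…,gₙ}` for some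
compatible selection `(g₁,…,gₙ) ∈ A₁ × … × Aₙ`. -/
def DD {Ω : Type v} {n : ℕ} (A : Fin n → Set (Gamble Ω)) : Set (Set (Gamble Ω)) :=
  {D | CoherentD D ∧ ∃ g : Fin n → Gamble Ω, (∀ i, g i ∈ A i) ∧
    (0 : Gamble Ω) ∉ desext (Set.range g) ∧ desext (Set.range g) ⊆ D}

/-! If every selection `g ∈ A₁ × … × Aₙ` had `0 ∈ desext (range g)`, each selection would yield a
gamble `f g ∈ posi (range g)` with `f g ≤ 0`. The addition axiom puts the set of all these `f g` into
`K`; dominating each of them by `0` gives `{0}` or `∅`, and removing `0` gives `∅ ∈ K`, which coherence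
forbids. So some selection avoids `0`, and its natural extension is a coherent member of `𝔻`.
The inclusion holds because a selection for the concatenated list restricts to a selection for
each part, and `desext` is monotone. -/

section Posi

variable {Ω : Type v}

lemma gle_iff_coe_le {f g : Gamble Ω} : gle f g ↔ (f : Ω → ℝ) ≤ g := Iff.rfl

lemma mem_Gpos_iff {g : Gamble Ω} : g ∈ Gpos Ω ↔ 0 < (g : Ω → ℝ) := by
  rw [lt_iff_le_and_ne, ne_comm, Ne, ZeroMemClass.coe_eq_zero]
  rfl

lemma posi_mono {B C : Set (Gamble Ω)} (h : B ⊆ C) : posi B ⊆ posi C := by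
  rintro f ⟨n, hn, l, g, hl, hg, rfl⟩
  exact ⟨n, hn, l, g, hl, fun i => h (hg i), rfl⟩

lemma sum_mem_posi {B : Set (Gamble Ω)} {ι : Type*} [Fintype ι] [Nonempty ι] {l : ι → ℝ}
    {g : ι → Gamble Ω} (hl : ∀ i, 0 < l i) (hg : ∀ i, g i ∈ B) : ∑ i, l i • g i ∈ posi B :=
  let e := Fintype.equivFin ι
  ⟨Fintype.card ι, Fintype.card_pos, l ∘ e.symm, g ∘ e.symm, fun _ => hl _, fun _ => hg _,
    (e.symm.sum_comp fun i => l i • g i).symm⟩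

lemma subset_posi (B : Set (Gamble Ω)) : B ⊆ posi B := fun f hf => by
  simpa using sum_mem_posi (ι := Unit) (l := fun _ => 1) (g := fun _ => f) (fun _ => one_pos)
    (fun _ => hf)

lemma smul_mem_posi {B : Set (Gamble Ω)} {f : Gamble Ω} (hf : f ∈ posi B) {c : ℝ} (hc : 0 < c) :
    c • f ∈ posi B := by
  obtain ⟨n, hn, l, g, hl, hg, rfl⟩ := hf
  refine ⟨n, hn, fun i => c * l i, g, fun i => mul_pos hc (hl i), hg, ?_⟩
  simp only [Finset.smul_sum, mul_smul]

lemma add_mem_posi {B : Set (Gamble Ω)} {f f' : Gamble Ω} (hf : f ∈ posi B) (hf' : f' ∈ posi B) :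
    f + f' ∈ posi B := by
  obtain ⟨n, hn, l, g, hl, hg, rfl⟩ := hf
  obtain ⟨m, -, l', g', hl', hg', rfl⟩ := hf'
  have : Nonempty (Fin n ⊕ Fin m) := ⟨.inl ⟨0, hn⟩⟩
  simpa [Fintype.sum_sum_type] using
    sum_mem_posi (B := B) (l := Sum.elim l l') (g := Sum.elim g g') (Sum.forall.2 ⟨hl, hl'⟩)
      (Sum.forall.2 ⟨hg, hg'⟩)

lemma posi_Gpos_subset : posi (Gpos Ω) ⊆ Gpos Ω := by
  rintro f ⟨n, hn, l, g, hl, hg, rfl⟩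
  rw [mem_Gpos_iff, Submodule.coe_sum]
  exact Finset.sum_pos (fun i _ => smul_pos (hl i) (mem_Gpos_iff.1 (hg i)))
    ⟨⟨0, hn⟩, Finset.mem_univ _⟩

end Posi

section Desext

variable {Ω : Type v}

lemma desext_mono {E E' : Set (Gamble Ω)} (h : E ⊆ E') : desext E ⊆ desext E' :=
  posi_mono (Set.union_subset_union_left _ h)

lemma coherentD_desext {E : Set (Gamble Ω)} (h0 : (0 : Gamble Ω) ∉ desext E) :
    CoherentD (desext E) :=
  ⟨h0, Set.subset_union_right.trans (subset_posi _), fun _ hg _ hl => smul_mem_posi hg hl,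
    fun _ hf _ hg => add_mem_posi hf hg⟩

lemma exists_mem_posi_gle_zero_of_zero_mem_desext {E : Set (Gamble Ω)}
    (h : (0 : Gamble Ω) ∈ desext E) : ∃ f ∈ posi E, gle f 0 := by
  classical
  obtain ⟨n, hn, l, g, hl, hg, hsum⟩ := h
  have : Nonempty (Fin n) := ⟨⟨0, hn⟩⟩
  set S := Finset.univ.filter fun i => g i ∈ E
  have hSc : ∀ i ∈ Sᶜ, g i ∈ Gpos Ω := fun i hi =>
    (hg i).resolve_left (by simpa [S] using hi)
  have hS : S.Nonempty := by
    rw [Finset.nonempty_iff_ne_empty]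
    intro hS
    have h0 : (0 : Gamble Ω) ∈ posi (Gpos Ω) :=
      hsum ▸ sum_mem_posi hl fun i => hSc i (by simp [hS])
    exact (posi_Gpos_subset h0).2 rfl
  have : Nonempty S := hS.to_subtype
  refine ⟨∑ i ∈ S, l i • g i, ?_, ?_⟩
  · rw [← Finset.sum_coe_sort]
    exact sum_mem_posi (fun i => hl i) fun i => (Finset.mem_filter.1 i.2).2
  · have hneg : ∑ i ∈ S, l i • g i = -∑ i ∈ Sᶜ, l i • g i :=
      eq_neg_of_add_eq_zero_left (by rw [Finset.sum_add_sum_compl, hsum])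
    rw [hneg, gle_iff_coe_le, Submodule.coe_neg, Submodule.coe_sum, ZeroMemClass.coe_zero,
      neg_nonpos]
    exact Finset.sum_nonneg fun i hi => smul_nonneg (hl i).le (mem_Gpos_iff.1 (hSc i hi)).le

end Desext

section Coherence

variable {Ω : Type v} {K : Set (Set (Gamble Ω))}

lemma CoherentK.exists_not_gle_zero (hK : CoherentK K) {A : Set (Gamble Ω)} (hA : A ∈ K) :
    ∃ f ∈ A, ¬ gle f 0 := by
  obtain ⟨hK_empty, hK_removeZero, -, -, hK_dominate, -⟩ := hK
  by_contra! hA0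
  have hzero : (fun _ => 0) '' A ∈ K := hK_dominate A hA _ hA0
  have hempty : (fun _ => (0 : Gamble Ω)) '' A \ {0} = ∅ := by
    rw [Set.sdiff_eq_empty]
    exact Set.image_subset_iff.2 fun _ _ => rfl
  exact hK_empty (hempty ▸ hK_removeZero _ hzero)

lemma CoherentK.exists_selection_zero_notMem_desext (hK : CoherentK K) {n : ℕ} (hn : 0 < n)
    {A : Fin n → Set (Gamble Ω)} (hA : ∀ i, A i ∈ K) :
    ∃ g : Fin n → Gamble Ω, (∀ i, g i ∈ A i) ∧ (0 : Gamble Ω) ∉ desext (Set.range g) := by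
  by_contra! hall
  have hF : ∀ g : Fin n → Gamble Ω, ∃ f, (∀ i, g i ∈ A i) → f ∈ posi (Set.range g) ∧ gle f 0 :=
    fun g => by
      by_cases hg : ∀ i, g i ∈ A i
      · obtain ⟨f, hf⟩ := exists_mem_posi_gle_zero_of_zero_mem_desext (hall g hg)
        exact ⟨f, fun _ => hf⟩
      · exact ⟨0, fun h => absurd h hg⟩
  choose F hF using hF
  have hK_add := hK.2.2.2.2.2
  obtain ⟨_, ⟨g, hg, rfl⟩, hpos⟩ :=
    hK.exists_not_gle_zero (hK_add n hn A hA F fun g hg => (hF g hg).1)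
  exact hpos (hF g hg).2

theorem DD_nonempty (hK : CoherentK K) {n : ℕ} (hn : 0 < n) {A : Fin n → Set (Gamble Ω)}
    (hA : ∀ i, A i ∈ K) : (DD A).Nonempty :=
  let ⟨g, hg, h0⟩ := hK.exists_selection_zero_notMem_desext hn hA
  ⟨desext (Set.range g), coherentD_desext h0, g, hg, h0, subset_rfl⟩

end Coherence

lemma DD_subset_DD_comp {Ω : Type v} {m n : ℕ} (A : Fin n → Set (Gamble Ω)) (σ : Fin m → Fin n) :
    DD A ⊆ DD (A ∘ σ) := by
  rintro D ⟨hD, g, hg, h0, hsub⟩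
  have hmono : desext (Set.range (g ∘ σ)) ⊆ desext (Set.range g) :=
    desext_mono (Set.range_comp_subset_range σ g)
  exact ⟨hD, g ∘ σ, fun i => hg (σ i), fun h => h0 (hmono h), hmono.trans hsub⟩

theorem stmt16_general {Ω : Type v} (K : Set (Set (Gamble Ω))) (hK : CoherentK K) :
    (∀ n : ℕ, 0 < n → ∀ A : Fin n → Set (Gamble Ω), (∀ i, A i ∈ K) →
      (DD A).Nonempty) ∧
    (∀ (n₁ n₂ : ℕ), 0 < n₁ → 0 < n₂ →
      ∀ (A : Fin n₁ → Set (Gamble Ω)) (C : Fin n₂ → Set (Gamble Ω)),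
      (∀ i, A i ∈ K) → (∀ i, C i ∈ K) →
      DD (Fin.append A C) ⊆ DD A ∩ DD C) := by
  refine ⟨fun n hn A hA => DD_nonempty hK hn hA, fun n₁ n₂ _ _ A C _ _ => ?_⟩
  have hA := DD_subset_DD_comp (Fin.append A C) (Fin.castAdd n₂)
  have hC := DD_subset_DD_comp (Fin.append A C) (Fin.natAdd n₁)
  rw [show Fin.append A C ∘ Fin.castAdd n₂ = A from funext (Fin.append_left A C)] at hA
  rw [show Fin.append A C ∘ Fin.natAdd n₁ = C from funext (Fin.append_right A C)] at hC
  exact Set.subset_inter hA hC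

theorem stmt16 {Ω : Type v} [Nonempty Ω] (K : Set (Set (Gamble Ω))) (hK : CoherentK K) :
    (∀ n : ℕ, 0 < n → ∀ A : Fin n → Set (Gamble Ω), (∀ i, A i ∈ K) →
      (DD A).Nonempty) ∧
    (∀ (n₁ n₂ : ℕ), 0 < n₁ → 0 < n₂ →
      ∀ (A : Fin n₁ → Set (Gamble Ω)) (C : Fin n₂ → Set (Gamble Ω)),
      (∀ i, A i ∈ K) → (∀ i, C i ∈ K) →
      DD (Fin.append A C) ⊆ DD A ∩ DD C) :=
  stmt16_general K hK
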